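/- arXiv:1705.10991 — 5 statements merged into one kernel-verified Lean document; each statement's English description precedes it below -/
import Mathlib

section
/- Let H be a countable abelian group and let (H_j)_{j∈ℕ} be a sequence of proper subgroups of finite index with H_j ⊋ H_{j+1} for all j. Then there exists a sequence (γ_j)_{j∈ℕ} in H such that H is the disjoint union of the cosets γ_j + H_j over j ∈ ℕ. -/
private noncomputable def pickNext {H : Type*} [AddCommGroup H]
    (S : ℕ → AddSubgroup H) (e : ℕ → H) (g : ℕ → H) (j : ℕ) : H :=
  e (sInf {k | ∀ i, i < j → e k - g i ∉ S i})

private noncomputable def gpre {H : Type*} [AddCommGroup H]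
    (S : ℕ → AddSubgroup H) (e : ℕ → H) : ℕ → ℕ → H
  | 0 => fun _ => 0
  | j+1 => fun i => if i = j then pickNext S e (gpre S e j) j else gpre S e j i

private noncomputable def gam {H : Type*} [AddCommGroup H]
    (S : ℕ → AddSubgroup H) (e : ℕ → H) (j : ℕ) : H :=
  pickNext S e (gpre S e j) j

private theorem gpre_eq {H : Type*} [AddCommGroup H]
    (S : ℕ → AddSubgroup H) (e : ℕ → H) :
    ∀ j i, i < j → gpre S e j i = gam S e i := by
  intro j
  induction j with
  | zero => intro i hi; omega
  | succ j ih =>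
    intro i hi
    rcases Nat.lt_succ_iff_lt_or_eq.mp hi with h | rfl
    · simp only [gpre, if_neg (Nat.ne_of_lt h)]
      exact ih i h
    · simp only [gpre, if_pos rfl, gam]
      simp

private theorem gam_eq {H : Type*} [AddCommGroup H]
    (S : ℕ → AddSubgroup H) (e : ℕ → H) (j : ℕ) :
    gam S e j = e (sInf {k | ∀ i, i < j → e k - gam S e i ∉ S i}) := by
  have hQP : {k | ∀ i, i < j → e k - gpre S e j i ∉ S i}
      = {k | ∀ i, i < j → e k - gam S e i ∉ S i} := by
    ext k
    exact forall_congr' fun i => imp_congr_right fun hi => by rw [gpre_eq S e j i hi]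
  show pickNext S e (gpre S e j) j = _
  unfold pickNext
  rw [hQP]

/-- Lemma 4.4 (grp_refine): a countable abelian group is a disjoint union of cosets
of a strictly decreasing sequence of proper finite-index subgroups. -/
theorem stmt_0 {H : Type*} [AddCommGroup H] [Countable H]
    (S : ℕ → AddSubgroup H)
    (hfin : ∀ j, (S j).FiniteIndex)
    (hproper : ∀ j, S j ≠ ⊤)
    (hstrict : ∀ j, S (j + 1) < S j) :
    ∃ γ : ℕ → H,
      (∀ i j, i ≠ j →
        Disjoint ((γ i + ·) '' (S i : Set H)) ((γ j + ·) '' (S j : Set H))) ∧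
      (⋃ j, (γ j + ·) '' (S j : Set H)) = Set.univ := by
  classical
  obtain ⟨e, he⟩ := exists_surjective_nat H
  set γ : ℕ → H := gam S e with hγdef
  have hanti : Antitone S := antitone_nat_of_succ_le (fun n => (hstrict n).le)
  -- the index sets of uncovered elements
  set K : ℕ → Set ℕ := fun j => {k | ∀ i, i < j → e k - γ i ∉ S i} with hKdef
  have hγval : ∀ j, γ j = e (sInf (K j)) := fun j => gam_eq S e j
  -- membership in a coset
  have hcos : ∀ (g : H) (A : AddSubgroup H) (x : H),
      x ∈ (g + ·) '' (A : Set H) ↔ x - g ∈ A := by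
    intro g A x
    constructor
    · rintro ⟨a, ha, rfl⟩; simpa using ha
    · intro h; exact ⟨x - g, h, by show g + (x - g) = x; abel⟩
  -- saturation: uncovered set is a union of cosets of S j
  have hsat : ∀ j x y, (∀ i, i < j → x - γ i ∉ S i) → y - x ∈ S j →
      (∀ i, i < j → y - γ i ∉ S i) := by
    intro j x y hx hyx i hi hmem
    refine hx i hi ?_
    have h1 : y - x ∈ S i := hanti hi.le hyx
    have h2 := (S i).sub_mem hmem h1
    have h3 : y - γ i - (y - x) = x - γ i := by abel
    rwa [h3] at h2
  -- invariant: at least two distinct cosets of S j are uncovered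
  have hinv : ∀ j, ∃ a b : H, (∀ i, i < j → a - γ i ∉ S i) ∧
      (∀ i, i < j → b - γ i ∉ S i) ∧ a - b ∉ S j := by
    intro j
    induction j with
    | zero =>
      have : ∃ a, a ∉ S 0 := by
        by_contra hcon
        push_neg at hcon
        exact hproper 0 ((AddSubgroup.eq_top_iff' _).mpr hcon)
      obtain ⟨a, ha⟩ := this
      exact ⟨a, 0, fun i hi => absurd hi (Nat.not_lt_zero i),
        fun i hi => absurd hi (Nat.not_lt_zero i), by simpa using ha⟩
    | succ j ih =>
      obtain ⟨a, b, haU, hbU, hab⟩ := ih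
      have hKne : (K j).Nonempty := by
        obtain ⟨k, hk⟩ := he a
        exact ⟨k, fun i hi => by rw [hk]; exact haU i hi⟩
      have hγU : ∀ i, i < j → γ j - γ i ∉ S i := by
        rw [hγval j]
        exact Nat.sInf_mem hKne
      -- choose c among a, b whose coset differs from that of γ j
      have hc : ∃ c : H, (∀ i, i < j → c - γ i ∉ S i) ∧ c - γ j ∉ S j := by
        by_cases h : a - γ j ∈ S j
        · refine ⟨b, hbU, fun hb => hab ?_⟩
          have h2 := (S j).sub_mem h hb
          have h3 : a - γ j - (b - γ j) = a - b := by abel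
          rwa [h3] at h2
        · exact ⟨a, haU, h⟩
      obtain ⟨c, hcU, hcγ⟩ := hc
      obtain ⟨t, htj, htj1⟩ := SetLike.exists_of_lt (hstrict j)
      refine ⟨c + t, c, ?_, ?_, by simpa using htj1⟩
      · intro i hi
        rcases Nat.lt_succ_iff_lt_or_eq.mp hi with h | rfl
        · exact hsat j c (c + t) hcU (by simpa using htj) i h
        · intro hmem
          have h2 := (S i).sub_mem hmem htj
          have h3 : c + t - γ i - t = c - γ i := by abel
          rw [h3] at h2
          exact hcγ h2
      · intro i hi
        rcases Nat.lt_succ_iff_lt_or_eq.mp hi with h | rfl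
        · exact hcU i h
        · exact hcγ
  -- each K j is nonempty
  have hKne : ∀ j, (K j).Nonempty := by
    intro j
    obtain ⟨a, _, haU, _, _⟩ := hinv j
    obtain ⟨k, hk⟩ := he a
    exact ⟨k, fun i hi => by rw [hk]; exact haU i hi⟩
  -- γ j is uncovered at stage j
  have hγU : ∀ j i, i < j → γ j - γ i ∉ S i := by
    intro j
    rw [hγval j]
    exact Nat.sInf_mem (hKne j)
  -- minimal indices N j := sInf (K j)
  set N : ℕ → ℕ := fun j => sInf (K j) with hNdef
  have hNlt : ∀ j, N j < N (j + 1) := by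
    intro j
    by_contra hcon
    push_neg at hcon
    have hmem : N (j + 1) ∈ K (j + 1) := Nat.sInf_mem (hKne (j + 1))
    rcases lt_or_eq_of_le hcon with h | h
    · -- N (j+1) < N j : contradicts minimality of N j
      have : N (j + 1) ∉ K j := Nat.notMem_of_lt_sInf h
      exact this (fun i hi => hmem i (hi.trans (Nat.lt_succ_self j)))
    · -- N (j+1) = N j : then e (N (j+1)) = γ j, but γ j is covered at stage j+1
      have h2 := hmem j (Nat.lt_succ_self j)
      rw [h, ← hγval j] at h2
      simp only [sub_self] at h2
      exact h2 (zero_mem _)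
  have hNge : ∀ j, j ≤ N j := by
    intro j
    induction j with
    | zero => exact Nat.zero_le _
    | succ j ih => exact Nat.succ_le_of_lt (lt_of_le_of_lt ih (hNlt j))
  -- covering: e k is covered at stage k + 1
  have hcover : ∀ k, ∃ i, i ≤ k ∧ e k - γ i ∈ S i := by
    intro k
    by_contra hcon
    push_neg at hcon
    have hkK : k ∈ K k := fun i hi => hcon i hi.le
    have h1 : N k ≤ k := Nat.sInf_le hkK
    have h2 : N k = k := le_antisymm h1 (hNge k)
    have h3 : γ k = e k := by rw [hγval k]; exact congrArg e h2
    have h4 := hcon k le_rfl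
    rw [h3] at h4
    simp only [sub_self] at h4
    exact h4 (zero_mem _)
  refine ⟨γ, ?_, ?_⟩
  · -- disjointness
    have key : ∀ i j, i < j →
        Disjoint ((γ i + ·) '' (S i : Set H)) ((γ j + ·) '' (S j : Set H)) := by
      intro i j hij
      rw [Set.disjoint_left]
      intro x hxi hxj
      rw [hcos] at hxi hxj
      exact hsat j (γ j) x (hγU j) hxj i hij hxi
    intro i j hij
    rcases hij.lt_or_gt with h | h
    · exact key i j h
    · exact (key j i h).symm
  · -- covering
    ext x
    simp only [Set.mem_univ, iff_true]
    obtain ⟨k, rfl⟩ := he x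
    obtain ⟨i, _, hik⟩ := hcover k
    exact Set.mem_iUnion.mpr ⟨i, (hcos (γ i) (S i) (e k)).mpr hik⟩
end

section
/- Let (k_j)_{j∈ℕ} be a sequence of positive reals with ∑_{j∈ℕ} k_j^n = ∞, and let K_j = k_j·[0,1)^n ⊂ ℝ^n. Then there exist vectors τ_j ∈ ℝ^n such that ℝ^n = ⋃_{j∈ℕ} (τ_j + K_j). -/
/-!
Shrink the cube `K_j` to a dyadic cube of side `2^{-ℓ_j} ≤ k_j` with `ℓ_j` minimal; the volumes
`2^{-nℓ_j}` still have a divergent sum. Number the dyadic cubes of each level by `ℕ` so that the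
`2ⁿ` children of cube `i` are the cubes `2ⁿ i + r`, `r < 2ⁿ`; the cubes containing a point `x`
then form a path `c` in this `2ⁿ`-ary tree with `c_s < (c_0 + 1) 2^{ns}`. If some level carries
infinitely many `j`, these cubes alone are placed on all cubes of that level. Otherwise the `N_m`
cubes of level `m` are placed on consecutive slots from `L_m`, the first slot not below a slot
used at a smaller level, so that every slot below `L_m + N_m` is covered; since
`(L_m + N_m) 2^{-nm} = ∑_{i ≤ m} N_i 2^{-ni} → ∞`, this eventually overtakes the path of `x`.
-/

open Finset Function

def IsTreePath (b : ℕ) (c : ℕ → ℕ) : Prop := ∀ s, c (s + 1) / b = c s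

namespace IsTreePath

variable {b : ℕ} {c : ℕ → ℕ}

lemma mul_le_succ (hc : IsTreePath b c) (s : ℕ) : b * c s ≤ c (s + 1) := by
  rw [← hc s, mul_comm]
  exact Nat.div_mul_le_self _ _

lemma lt_mul_pow (hb : 0 < b) (hc : IsTreePath b c) (s : ℕ) : c s < (c 0 + 1) * b ^ s := by
  induction s with
  | zero => simp
  | succ s ih =>
    calc c (s + 1) < (c s + 1) * b := (Nat.div_lt_iff_lt_mul hb).1 (by rw [hc s]; omega)
      _ ≤ (c 0 + 1) * b ^ s * b := Nat.mul_le_mul_right _ ih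
      _ = (c 0 + 1) * b ^ (s + 1) := by ring

end IsTreePath

section Packing

variable (b : ℕ) (ℓ : ℕ → ℕ)

/-- The `j` with `ℓ j = m` are packed on consecutive slots from `levelOffset b ℓ m` on, the first
slot of level `m` not lying below a slot used at a smaller level. -/
noncomputable def levelOffset : ℕ → ℕ
  | 0 => 0
  | m + 1 => b * (levelOffset m + {j | ℓ j = m}.ncard)

noncomputable def packedSlot (j : ℕ) : ℕ :=
  levelOffset b ℓ (ℓ j) + Nat.count (fun i => ℓ i = ℓ j) j

variable {b ℓ}

lemma exists_packedSlot_eq {m i : ℕ}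
    (hi₁ : levelOffset b ℓ m ≤ i) (hi₂ : i < levelOffset b ℓ m + {j | ℓ j = m}.ncard) :
    ∃ j, ℓ j = m ∧ packedSlot b ℓ j = i := by
  have hrank : ∀ hf : (Set.ofPred fun j => ℓ j = m).Finite,
      i - levelOffset b ℓ m < hf.toFinset.card := fun hf => by
    rw [← Set.ncard_eq_toFinset_card _ hf]
    omega
  refine ⟨Nat.nth (fun j => ℓ j = m) (i - levelOffset b ℓ m), Nat.nth_mem _ hrank, ?_⟩
  rw [packedSlot, Nat.nth_mem _ hrank, Nat.count_nth hrank]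
  omega

lemma levelOffset_add_ncard_eq (hb : b ≠ 0) (m : ℕ) :
    ((levelOffset b ℓ m + {j | ℓ j = m}.ncard : ℕ) : ℝ)
      = (b : ℝ) ^ m * ∑ i ∈ range (m + 1), ({j | ℓ j = i}.ncard : ℝ) / (b : ℝ) ^ i := by
  induction m with
  | zero => simp [levelOffset]
  | succ m ih =>
    have hbm : (b : ℝ) ^ (m + 1) ≠ 0 := by positivity
    rw [levelOffset, sum_range_succ, mul_add ((b : ℝ) ^ (m + 1)), mul_div_cancel₀ _ hbm, pow_succ,
      mul_right_comm, ← ih]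
    push_cast
    ring

lemma not_summable_ncard_div_pow (hfin : ∀ m, {j | ℓ j = m}.Finite)
    (hdiv : ¬ Summable fun j => ((b : ℝ) ^ ℓ j)⁻¹) :
    ¬ Summable fun m => ({j | ℓ j = m}.ncard : ℝ) / (b : ℝ) ^ m := by
  intro hsum
  refine hdiv ((summable_partition (fun j => by positivity) (s := fun m => {j | ℓ j = m})
    (fun j => ⟨ℓ j, rfl, fun m hm => hm.symm⟩)).2
      ⟨fun m => (hfin m).summable fun j => ((b : ℝ) ^ ℓ j)⁻¹, ?_⟩)
  refine hsum.congr fun m => ?_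
  rw [tsum_congr (fun j : {j | ℓ j = m} => by rw [j.2]), tsum_const, Nat.card_coe_set_eq,
    nsmul_eq_mul, div_eq_mul_inv]

theorem exists_packedSlot_eq_of_isTreePath (hb : 0 < b) (hfin : ∀ m, {j | ℓ j = m}.Finite)
    (hdiv : ¬ Summable fun j => ((b : ℝ) ^ ℓ j)⁻¹) {c : ℕ → ℕ} (hc : IsTreePath b c) :
    ∃ j, packedSlot b ℓ j = c (ℓ j) := by
  by_contra! hmiss
  have hpast : ∀ m, levelOffset b ℓ m ≤ c m → levelOffset b ℓ m + {j | ℓ j = m}.ncard ≤ c m := by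
    intro m hm
    by_contra! hlt
    obtain ⟨j, rfl, hj⟩ := exists_packedSlot_eq hm hlt
    exact hmiss j hj
  have hbelow : ∀ m, levelOffset b ℓ m + {j | ℓ j = m}.ncard ≤ c m := by
    intro m
    refine hpast m ?_
    induction m with
    | zero => exact Nat.zero_le _
    | succ m ih => exact (Nat.mul_le_mul_left b (hpast m ih)).trans (hc.mul_le_succ m)
  refine not_summable_ncard_div_pow hfin hdiv (summable_of_sum_range_le (c := c 0 + 1)
    (fun m => by positivity) fun m => ?_)
  rcases m with _ | m
  · simp only [range_zero, sum_empty]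
    positivity
  have hpow : (0 : ℝ) < (b : ℝ) ^ m := by positivity
  have hlt := (hbelow m).trans_lt (hc.lt_mul_pow hb m)
  rw [← Nat.cast_lt (α := ℝ), levelOffset_add_ncard_eq hb.ne', mul_comm] at hlt
  push_cast at hlt
  exact (lt_of_mul_lt_mul_right hlt hpow.le).le

theorem exists_slots_meeting_treePaths (hb : 0 < b)
    (hdiv : ¬ Summable fun j => ((b : ℝ) ^ ℓ j)⁻¹) :
    ∃ σ : ℕ → ℕ, ∀ c, IsTreePath b c → ∃ j, σ j = c (ℓ j) := by
  by_cases hfin : ∀ m, {j | ℓ j = m}.Finite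
  · exact ⟨packedSlot b ℓ, fun c hc => exists_packedSlot_eq_of_isTreePath hb hfin hdiv hc⟩
  obtain ⟨m, hm⟩ := not_forall.1 hfin
  refine ⟨Nat.count fun j => ℓ j = m, fun c _ => ⟨Nat.nth (fun j => ℓ j = m) (c m), ?_⟩⟩
  rw [Nat.count_nth_of_infinite hm, Nat.nth_mem_of_infinite hm]

end Packing

section Dyadic

variable (n : ℕ)

/-- A numbering of the cubes `2^{-s} (z + [0,1)ⁿ)`, `z ∈ ℤⁿ`, of level `s` in which the children
`2z + ε`, `ε ∈ {0,1}ⁿ`, of the cube numbered `i` are numbered `2ⁿ i + r` with `r < 2ⁿ`. -/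
noncomputable def dyadicIndex : ℕ → (Fin n → ℤ) → ℕ
  | 0, z => Encodable.encode z
  | s + 1, z =>
    2 ^ n * dyadicIndex s (fun d => z d / 2) + finFunctionFinEquiv fun d => (z d : ZMod 2)

lemma dyadicIndex_succ_div (s : ℕ) (z : Fin n → ℤ) :
    dyadicIndex n (s + 1) z / 2 ^ n = dyadicIndex n s fun d => z d / 2 := by
  rw [dyadicIndex, Nat.mul_add_div (by positivity), Nat.div_eq_of_lt (Fin.is_lt _), add_zero]

lemma dyadicIndex_succ_mod (s : ℕ) (z : Fin n → ℤ) :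
    dyadicIndex n (s + 1) z % 2 ^ n = finFunctionFinEquiv fun d => (z d : ZMod 2) := by
  rw [dyadicIndex, Nat.mul_add_mod, Nat.mod_eq_of_lt (Fin.is_lt _)]

lemma dyadicIndex_injective (s : ℕ) : Injective (dyadicIndex n s) := by
  induction s with
  | zero => exact Encodable.encode_injective
  | succ s ih =>
    intro z z' h
    have hdiv : (fun d => z d / 2) = fun d => z' d / 2 := ih <| by
      rw [← dyadicIndex_succ_div n s z, ← dyadicIndex_succ_div n s z', h]
    have hmod : (fun d => (z d : ZMod 2)) = fun d => (z' d : ZMod 2) :=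
      finFunctionFinEquiv.injective <| Fin.ext <| by
        rw [← dyadicIndex_succ_mod n s z, ← dyadicIndex_succ_mod n s z', h]
    funext d
    have hq : z d / 2 = z' d / 2 := congrFun hdiv d
    have hr : z d % 2 = z' d % 2 := (ZMod.intCast_eq_intCast_iff' _ _ 2).1 (congrFun hmod d)
    rw [← Int.emod_add_mul_ediv (z d) 2, ← Int.emod_add_mul_ediv (z' d) 2, hq, hr]

noncomputable def dyadicCoord (s : ℕ) (x : Fin n → ℝ) : Fin n → ℤ := fun d => ⌊2 ^ s * x d⌋

lemma dyadicCoord_succ_div (s : ℕ) (x : Fin n → ℝ) :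
    (fun d => dyadicCoord n (s + 1) x d / 2) = dyadicCoord n s x := by
  funext d
  rw [dyadicCoord, dyadicCoord, ← Int.floor_div_cast_of_nonneg zero_le_two, pow_succ]
  congr 1
  push_cast
  ring

lemma isTreePath_dyadicIndex (x : Fin n → ℝ) :
    IsTreePath (2 ^ n) fun s => dyadicIndex n s (dyadicCoord n s x) := fun s => by
  rw [dyadicIndex_succ_div, dyadicCoord_succ_div]

lemma sub_dyadicCoord_mem_Ico (s : ℕ) (x : Fin n → ℝ) (d : Fin n) :
    x d - (2 ^ s)⁻¹ * dyadicCoord n s x d ∈ Set.Ico 0 (2 ^ s)⁻¹ := by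
  have hs : (0 : ℝ) < 2 ^ s := by positivity
  have h₁ := Int.floor_le (2 ^ s * x d)
  have h₂ := Int.lt_floor_add_one (2 ^ s * x d)
  have hx : x d - (2 ^ s)⁻¹ * dyadicCoord n s x d
      = (2 ^ s)⁻¹ * (2 ^ s * x d - ⌊2 ^ s * x d⌋) := by
    rw [dyadicCoord]
    field_simp
  rw [hx]
  exact ⟨mul_nonneg (inv_nonneg.2 hs.le) (sub_nonneg.2 h₁),
    mul_lt_of_lt_one_right (inv_pos.2 hs) (by linarith)⟩

end Dyadic

lemma exists_maximal_inv_two_pow_le {k : ℝ} (hk : 0 < k) :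
    ∃ m : ℕ, (2 ^ m)⁻¹ ≤ k ∧ (m = 0 ∨ k < 2 * (2 ^ m)⁻¹) := by
  classical
  have hex : ∃ m : ℕ, ((2 : ℝ) ^ m)⁻¹ ≤ k := by
    obtain ⟨m, hm⟩ := exists_pow_lt_of_lt_one hk (by norm_num : (2⁻¹ : ℝ) < 1)
    exact ⟨m, by rw [← inv_pow]; exact hm.le⟩
  refine ⟨Nat.find hex, Nat.find_spec hex, ?_⟩
  rcases h : Nat.find hex with _ | m
  · exact .inl rfl
  · have hm := not_le.1 (Nat.find_min hex (by omega : m < Nat.find hex))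
    rw [pow_succ, mul_inv, mul_left_comm, mul_inv_cancel₀ two_ne_zero, mul_one]
    exact .inr hm

lemma not_summable_inv_pow_of_not_summable_pow {n : ℕ} {k : ℕ → ℝ} (hk : ∀ j, 0 ≤ k j)
    {ℓ : ℕ → ℕ} (hℓ : ∀ j, ℓ j = 0 ∨ k j < 2 * (2 ^ ℓ j)⁻¹)
    (hdiv : ¬ Summable fun j => k j ^ n) :
    ¬ Summable fun j => (((2 ^ n : ℕ) : ℝ) ^ ℓ j)⁻¹ := by
  intro hsum
  refine hdiv ((hsum.mul_left (2 ^ n)).of_norm_bounded_eventually_nat ?_)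
  filter_upwards [hsum.tendsto_atTop_zero.eventually_lt_const one_pos] with j hj
  have hℓj : ℓ j ≠ 0 := by
    rintro h
    simp [h] at hj
  rw [Real.norm_of_nonneg (pow_nonneg (hk j) n)]
  calc k j ^ n ≤ (2 * (2 ^ ℓ j)⁻¹) ^ n := pow_le_pow_left₀ (hk j) ((hℓ j).resolve_left hℓj).le n
    _ = 2 ^ n * (((2 ^ n : ℕ) : ℝ) ^ ℓ j)⁻¹ := by
      rw [mul_pow, inv_pow, ← pow_mul, Nat.cast_pow, Nat.cast_ofNat, ← pow_mul, mul_comm n]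

/-- Lemma 4.6 (cubes): cubes of infinite total volume can be translated to cover ℝⁿ. -/
theorem stmt_1 (n : ℕ) (k : ℕ → ℝ) (hk : ∀ j, 0 < k j)
    (hdiv : ¬ Summable (fun j => (k j) ^ n)) :
    ∃ τ : ℕ → (Fin n → ℝ),
      (⋃ j, (fun x => τ j + x) '' {x : Fin n → ℝ | ∀ i, x i ∈ Set.Ico 0 (k j)})
        = Set.univ := by
  choose ℓ hℓk hℓ using fun j => exists_maximal_inv_two_pow_le (hk j)
  obtain ⟨σ, hσ⟩ := exists_slots_meeting_treePaths (b := 2 ^ n) (ℓ := ℓ) (by positivity)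
    (not_summable_inv_pow_of_not_summable_pow (fun j => (hk j).le) hℓ hdiv)
  let τ j : Fin n → ℝ := fun d => (2 ^ ℓ j)⁻¹ * invFun (dyadicIndex n (ℓ j)) (σ j) d
  refine ⟨τ, Set.eq_univ_of_forall fun x => Set.mem_iUnion.2 ?_⟩
  obtain ⟨j, hj⟩ := hσ _ (isTreePath_dyadicIndex n x)
  have hz : invFun (dyadicIndex n (ℓ j)) (σ j) = dyadicCoord n (ℓ j) x := by
    rw [hj]
    exact leftInverse_invFun (dyadicIndex_injective n _) _
  refine ⟨j, x - τ j, fun d => ?_, add_sub_cancel _ _⟩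
  have hx := sub_dyadicCoord_mem_Ico n (ℓ j) x d
  simp only [τ, hz, Pi.sub_apply]
  exact ⟨hx.1, hx.2.trans_le (hℓk j)⟩
end

section
/- Let c be a transcendental real number and define c_n = n + c for n ∈ ℕ. Then the family (c_n)_{n∈ℕ} is linearly dependent over ℚ, but the family (1/c_n)_{n∈ℕ} is linearly independent over ℚ. -/
theorem not_linearIndependent_natCast_add {K R : Type*} [CommRing K] [Nontrivial K] [Ring R]
    [Algebra K R] (c : R) : ¬ LinearIndependent K (fun n : ℕ => (n : R) + c) := by
  intro h
  have h4 := Fintype.linearIndependent_iff.mp (h.comp (fun i : Fin 4 => (i : ℕ)) Fin.val_injective)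
  have := h4 ![1, -1, -1, 1] (by simp [Fin.sum_univ_four]; grind) 0
  simp at this

theorem Transcendental.linearIndependent_inv_natCast_add {K L : Type*} [Field K] [CharZero K]
    [Field L] [Algebra K L] {c : L} (hc : Transcendental K c) :
    LinearIndependent K (fun n : ℕ => ((n : L) + c)⁻¹) := by
  have hneg : Function.Injective (fun n : ℕ => -(n : K)) :=
    neg_injective.comp Nat.cast_injective
  convert hc.linearIndependent_sub_inv.comp _ hneg using 2 with n
  simp [add_comm]

/-- For transcendental c, the family (n + c)_{n∈ℕ} is ℚ-linearly dependent,
while (1/(n + c))_{n∈ℕ} is ℚ-linearly independent. -/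
theorem stmt_4 (c : ℝ) (hc : Transcendental ℚ c) :
    ¬ LinearIndependent ℚ (fun n : ℕ => (n : ℝ) + c) ∧
      LinearIndependent ℚ (fun n : ℕ => ((n : ℝ) + c)⁻¹) :=
  ⟨not_linearIndependent_natCast_add c, hc.linearIndependent_inv_natCast_add⟩
end

section
/- Fix an integer N ≥ 2. Define τ_1 = 0 and inductively let τ_j be the smallest integer t in absolute value (choosing the positive one in case of a tie) such that (t + N^j ℤ) is disjoint from ⋃_{i<j} (τ_i + N^i ℤ). Then ℤ is the disjoint union ⨆_{j∈ℕ} (τ_j + N^j ℤ). -/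
/-- The coset `t + N^j ℤ` as a subset of ℤ. -/
def coset (N : ℕ) (j : ℕ) (t : ℤ) : Set ℤ := {x : ℤ | (N : ℤ) ^ j ∣ x - t}

/-- `t` is an available representative at stage `j`: the coset `t + N^j ℤ` is disjoint
from all previously chosen cosets `τ i + N^i ℤ`, `1 ≤ i < j`. -/
def Avail (N : ℕ) (τ : ℕ → ℤ) (j : ℕ) (t : ℤ) : Prop :=
  ∀ i, 1 ≤ i → i < j → Disjoint (coset N j t) (coset N i (τ i))

/-- The greedy rule: τ 1 = 0, and for j ≥ 2, τ j is an available representative of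
smallest absolute value, chosen positive in case of a tie. -/
def IsGreedy (N : ℕ) (τ : ℕ → ℤ) : Prop :=
  τ 1 = 0 ∧ ∀ j, 2 ≤ j →
    Avail N τ j (τ j) ∧
    (∀ t : ℤ, Avail N τ j t → |τ j| ≤ |t|) ∧
    (∀ t : ℤ, Avail N τ j t → |t| = |τ j| → t = τ j ∨ 0 < τ j)

/-!
Disjointness is built into the greedy rule. For the covering, an integer `x` lying in no chosen
coset would be an available representative at every stage, so every `τ j` with `j ≥ 2` would
satisfy `|τ j| ≤ |x|`. But the `τ j` are pairwise distinct, since `τ j` lies in its own coset and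
the cosets are disjoint, and infinitely many distinct integers cannot fit in `[-|x|, |x|]`.
-/

lemma mem_coset_self (N j : ℕ) (t : ℤ) : t ∈ coset N j t := by simp [coset]

lemma coset_subset_of_le {N i j : ℕ} (hij : i ≤ j) (t : ℤ) : coset N j t ⊆ coset N i t :=
  fun _ hx => (pow_dvd_pow _ hij).trans hx

lemma disjoint_coset_of_not_mem {N i j : ℕ} (hij : i ≤ j) {s t : ℤ} (h : s ∉ coset N i t) :
    Disjoint (coset N j s) (coset N i t) := by
  rw [Set.disjoint_left]
  intro y hys hyt
  exact h (by simpa [coset] using dvd_sub hyt (coset_subset_of_le hij s hys))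

namespace IsGreedy

variable {N : ℕ} {τ : ℕ → ℤ}

lemma disjoint_of_lt (hτ : IsGreedy N τ) {i j : ℕ} (hi : 1 ≤ i) (hij : i < j) :
    Disjoint (coset N j (τ j)) (coset N i (τ i)) :=
  (hτ.2 j (by omega)).1 i hi hij

lemma pairwise_disjoint (hτ : IsGreedy N τ) :
    ∀ i j, 1 ≤ i → 1 ≤ j → i ≠ j → Disjoint (coset N i (τ i)) (coset N j (τ j)) := by
  intro i j hi hj hne
  rcases hne.lt_or_gt with h | h
  · exact (hτ.disjoint_of_lt hi h).symm
  · exact hτ.disjoint_of_lt hj h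

lemma injOn (hτ : IsGreedy N τ) : Set.InjOn τ (Set.Ici 1) := by
  intro i hi j hj hij
  by_contra hne
  exact Set.disjoint_left.mp (hτ.pairwise_disjoint i j hi hj hne)
    (mem_coset_self N i (τ i)) (hij ▸ mem_coset_self N j (τ j))

lemma avail_of_forall_not_mem {x : ℤ} (hx : ∀ i, 1 ≤ i → x ∉ coset N i (τ i)) (j : ℕ) :
    Avail N τ j x :=
  fun i hi hij => disjoint_coset_of_not_mem hij.le (hx i hi)

lemma abs_le_of_forall_not_mem (hτ : IsGreedy N τ) {x : ℤ}
    (hx : ∀ i, 1 ≤ i → x ∉ coset N i (τ i)) {j : ℕ} (hj : 2 ≤ j) : |τ j| ≤ |x| :=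
  (hτ.2 j hj).2.1 x (avail_of_forall_not_mem hx j)

lemma iUnion_coset_eq_univ (hτ : IsGreedy N τ) :
    (⋃ (j : ℕ) (_ : 1 ≤ j), coset N j (τ j)) = Set.univ := by
  refine Set.eq_univ_of_forall fun x => ?_
  by_contra hx
  simp only [Set.mem_iUnion, not_exists] at hx
  have hmaps : Set.MapsTo τ (Set.Ici 2) (Set.Icc (-|x|) |x|) :=
    fun j hj => abs_le.mp (hτ.abs_le_of_forall_not_mem hx hj)
  have hinj : Set.InjOn τ (Set.Ici 2) :=
    hτ.injOn.mono (Set.Ici_subset_Ici.mpr (by norm_num))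
  exact (Set.finite_Icc _ _).not_infinite
    (Set.infinite_of_injOn_mapsTo hinj hmaps (Set.Ici_infinite 2))

end IsGreedy

theorem stmt_6_general (N : ℕ) (τ : ℕ → ℤ) (hτ : IsGreedy N τ) :
    (∀ i j, 1 ≤ i → 1 ≤ j → i ≠ j →
      Disjoint (coset N i (τ i)) (coset N j (τ j))) ∧
    (⋃ (j : ℕ) (_ : 1 ≤ j), coset N j (τ j)) = Set.univ :=
  ⟨hτ.pairwise_disjoint, hτ.iUnion_coset_eq_univ⟩

/-- For N ≥ 2, the greedy cosets τ_j + N^j ℤ, j ≥ 1, form a partition of ℤ. -/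
theorem stmt_6 (N : ℕ) (hN : 2 ≤ N) (τ : ℕ → ℤ) (hτ : IsGreedy N τ) :
    (∀ i j, 1 ≤ i → 1 ≤ j → i ≠ j →
      Disjoint (coset N i (τ i)) (coset N j (τ j))) ∧
    (⋃ (j : ℕ) (_ : 1 ≤ j), coset N j (τ j)) = Set.univ :=
  stmt_6_general N τ hτ
end

section
/- Let Γ and Λ₁, …, Λ_m be lattices in an LCA group G with Haar measure, and suppose Γ ⊇ ⨆_{i=1}^m (γ_i + Λ_i) is a disjoint union of cosets with each Λ_i ≤ Γ of finite index. Then 1/covol(Γ) ≥ ∑_{i=1}^m 1/covol(Λ_i). -/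
/-!
Put `K = ⋂ i, Λᵢ`, a subgroup of finite index in `Γ`. Each coset `γᵢ + Λᵢ` is a union of
`[Λᵢ : K]` cosets of `K`, and these are distinct for distinct `i` by disjointness, so
`∑ i, [Λᵢ : K] ≤ [Γ : K]`. Dividing by `[Γ : K] = [Λᵢ : K] [Γ : Λᵢ]` gives
`∑ i, 1 / [Γ : Λᵢ] ≤ 1`, and the covolumes only rescale this by `covol Γ`.
-/

open Pointwise

namespace AddSubgroup

variable {G : Type*} [AddGroup G] {ι : Type*} {H : ι → AddSubgroup G} {g : ι → G}

/-- The map `(i, h + K) ↦ g i + h + K`. -/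
def sigmaQuotientToQuotient (K : AddSubgroup G) (g : ι → G) :
    (Σ i, H i ⧸ K.addSubgroupOf (H i)) → G ⧸ K :=
  fun p => Quotient.map' (fun h : H p.1 => g p.1 + h)
    (fun a b hab => by
      rw [QuotientAddGroup.leftRel_apply, mem_addSubgroupOf] at hab
      rw [QuotientAddGroup.leftRel_apply]
      simpa [neg_add_rev, add_assoc] using hab) p.2

theorem sigmaQuotientToQuotient_injective {K : AddSubgroup G} (hK : ∀ i, K ≤ H i)
    (hdisj : Pairwise fun i j => Disjoint (g i +ᵥ (H i : Set G)) (g j +ᵥ (H j : Set G))) :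
    Function.Injective (sigmaQuotientToQuotient (H := H) K g) := by
  rintro ⟨i, x⟩ ⟨j, y⟩ hxy
  induction x using QuotientAddGroup.induction_on with | H x =>
  induction y using QuotientAddGroup.induction_on with | H y =>
  have hmem : -(g i + x) + (g j + y) ∈ K := QuotientAddGroup.eq.mp hxy
  obtain rfl | hij := eq_or_ne i j
  · have : -x + y ∈ K.addSubgroupOf (H i) := by
      simpa [mem_addSubgroupOf, neg_add_rev, add_assoc] using hmem
    rw [QuotientAddGroup.eq.mpr this]
  · refine ((hdisj hij).ne_of_mem (a := g j + y) ?_ ?_ rfl).elim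
    · rw [mem_leftAddCoset_iff]
      simpa [neg_add_rev, add_assoc] using (H i).add_mem x.2 (hK i hmem)
    · exact (mem_leftAddCoset_iff _).mpr (by simp)

theorem vadd_coe_addSubgroupOf {K : AddSubgroup G} (g : K) (L : AddSubgroup G) :
    g +ᵥ (L.addSubgroupOf K : Set K) = Subtype.val ⁻¹' ((g : G) +ᵥ (L : Set G)) := by
  ext x
  simp [mem_leftAddCoset_iff, mem_addSubgroupOf]

theorem sum_inv_index_le_one_of_pairwise_disjoint_leftAddCoset [Fintype ι]
    (hfin : ∀ i, (H i).index ≠ 0)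
    (hdisj : Pairwise fun i j => Disjoint (g i +ᵥ (H i : Set G)) (g j +ᵥ (H j : Set G))) :
    ∑ i, ((H i).index : ℝ)⁻¹ ≤ 1 := by
  set K := ⨅ i, H i
  have hK : ∀ i, K ≤ H i := iInf_le H
  have hKfin : K.index ≠ 0 := index_iInf_ne_zero hfin
  have : K.FiniteIndex := ⟨hKfin⟩
  have hrel : ∀ i, ((H i).index : ℝ)⁻¹ = K.relIndex (H i) / K.index := fun i => by
    rw [← relIndex_mul_index (hK i), Nat.cast_mul,
      div_mul_cancel_left₀ (mod_cast FiniteIndex.index_ne_zero)]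
  have hcard : ∑ i, K.relIndex (H i) ≤ K.index := by
    calc ∑ i, K.relIndex (H i) = Nat.card (Σ i, H i ⧸ K.addSubgroupOf (H i)) := by
          simp [Nat.card_sigma, relIndex, index_eq_card]
      _ ≤ Nat.card (G ⧸ K) :=
          Nat.card_le_card_of_injective _ (sigmaQuotientToQuotient_injective hK hdisj)
      _ = K.index := (index_eq_card K).symm
  rw [Finset.sum_congr rfl fun i _ => hrel i, ← Finset.sum_div, div_le_one (by positivity)]
  exact_mod_cast hcard

end AddSubgroup

open AddSubgroup in
theorem stmt_14_general {G : Type*} [AddCommGroup G] (m : ℕ)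
    (Γ : AddSubgroup G) (Λ : Fin m → AddSubgroup G)
    (hfin : ∀ i, (Λ i).relIndex Γ ≠ 0)
    (γ : Fin m → G)
    (hsub : ∀ i, ((γ i + ·) '' (Λ i : Set G)) ⊆ (Γ : Set G))
    (hdisj : ∀ i j, i ≠ j →
      Disjoint ((γ i + ·) '' (Λ i : Set G)) ((γ j + ·) '' (Λ j : Set G)))
    (covolΓ : ℝ) (hpos : 0 < covolΓ)
    (covolΛ : Fin m → ℝ)
    (hcovol : ∀ i, covolΛ i = ((Λ i).relIndex Γ : ℝ) * covolΓ) :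
    ∑ i, (covolΛ i)⁻¹ ≤ covolΓ⁻¹ := by
  have hγ : ∀ i, γ i ∈ Γ := fun i => hsub i ⟨0, zero_mem _, add_zero _⟩
  have hdisjΓ : Pairwise fun i j =>
      Disjoint ((⟨γ i, hγ i⟩ : Γ) +ᵥ ((Λ i).addSubgroupOf Γ : Set Γ))
        ((⟨γ j, hγ j⟩ : Γ) +ᵥ ((Λ j).addSubgroupOf Γ : Set Γ)) := fun i j hij => by
    have := (hdisj i j hij).preimage ((↑) : Γ → G)
    simpa only [vadd_coe_addSubgroupOf, ← vadd_eq_add, Set.image_vadd] using this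
  have hsum : ∑ i, ((Λ i).relIndex Γ : ℝ)⁻¹ ≤ 1 :=
    sum_inv_index_le_one_of_pairwise_disjoint_leftAddCoset hfin hdisjΓ
  calc ∑ i, (covolΛ i)⁻¹ = (∑ i, ((Λ i).relIndex Γ : ℝ)⁻¹) * covolΓ⁻¹ := by
        simp only [hcovol, mul_inv, Finset.sum_mul]
    _ ≤ covolΓ⁻¹ := mul_le_of_le_one_left (by positivity) hsum

/-- If Γ contains a disjoint union of cosets γ_i + Λ_i of finite-index subgroups Λ_i ≤ Γ,
then 1/covol(Γ) ≥ ∑ 1/covol(Λ_i), where covol(Λ_i) = [Γ : Λ_i]·covol(Γ). -/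
theorem stmt_14 {G : Type*} [AddCommGroup G] (m : ℕ)
    (Γ : AddSubgroup G) (Λ : Fin m → AddSubgroup G)
    (hle : ∀ i, Λ i ≤ Γ)
    (hfin : ∀ i, (Λ i).relIndex Γ ≠ 0)
    (γ : Fin m → G)
    (hsub : ∀ i, ((γ i + ·) '' (Λ i : Set G)) ⊆ (Γ : Set G))
    (hdisj : ∀ i j, i ≠ j →
      Disjoint ((γ i + ·) '' (Λ i : Set G)) ((γ j + ·) '' (Λ j : Set G)))
    (covolΓ : ℝ) (hpos : 0 < covolΓ)
    (covolΛ : Fin m → ℝ)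
    (hcovol : ∀ i, covolΛ i = ((Λ i).relIndex Γ : ℝ) * covolΓ) :
    ∑ i, (covolΛ i)⁻¹ ≤ covolΓ⁻¹ :=
  stmt_14_general m Γ Λ hfin γ hsub hdisj covolΓ hpos covolΛ hcovol
end
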